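/- arXiv:1902.06275 — 4 statements merged into one kernel-verified Lean document; each statement's English description precedes it below -/
import Mathlib

section
/- Let σ 0^{a} and τ 0^{b} be two distinct blocks in B_{q,ℓ,r} (so σ, τ ∈ {1,…,q−1} and a, b are of the form L(i,j)). Then σ 0^{a} and τ 0^{b} are non-confusable in the (ℓ,r)-0-insertion channel; i.e., B_{q,ℓ,r} is a zero-error code for this channel. -/
namespace ZeroErrorDup

/-- Output relation of the (ℓ,r)-0-insertion channel acting on strings over the
alphabet A_q = {0,1,…,q−1} (encoded as lists of naturals): after each input symbol,
`c` copies of the block `0^ℓ` are inserted, for some `c ∈ {0,1,…,r}`. -/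
inductive IsOutput (ℓ r : ℕ) : List ℕ → List ℕ → Prop
  | nil : IsOutput ℓ r [] []
  | cons (a : ℕ) (c : ℕ) (hc : c ≤ r) {x y : List ℕ} :
      IsOutput ℓ r x y → IsOutput ℓ r (a :: x) (a :: (List.replicate (c * ℓ) 0 ++ y))

/-- Two strings are confusable if some string is an output of both. -/
def Confusable (ℓ r : ℕ) (x y : List ℕ) : Prop :=
  ∃ z, IsOutput ℓ r x z ∧ IsOutput ℓ r y z

/-- A set of strings is a zero-error code if every two distinct elements are
non-confusable. -/
def ZeroErrorCode (ℓ r : ℕ) (C : Set (List ℕ)) : Prop :=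
  ∀ x ∈ C, ∀ y ∈ C, x ≠ y → ¬ Confusable ℓ r x y

/-- `L ℓ r i j = ((r i + 1)(r ℓ + 1)^j − 1)/r − 1` (the division is exact). -/
def L (ℓ r i j : ℕ) : ℕ := ((r * i + 1) * (r * ℓ + 1) ^ j - 1) / r - 1

/-- The block `σ 0^u`: the symbol `σ` followed by a run of `u` zeros. -/
def block (σ u : ℕ) : List ℕ := σ :: List.replicate u 0

/-- `B q ℓ r`: the set of blocks `σ 0^{L(i,j)}` with `σ ∈ {1,…,q−1}`, `1 ≤ i ≤ ℓ`, `j ≥ 0`. -/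
def B (q ℓ r : ℕ) : Set (List ℕ) :=
  { b | ∃ σ i j : ℕ, 1 ≤ σ ∧ σ ≤ q - 1 ∧ 1 ≤ i ∧ i ≤ ℓ ∧ b = block σ (L ℓ r i j) }


def K (ℓ r i : ℕ) : ℕ → ℕ
  | 0 => i
  | j + 1 => K ℓ r i j * (r * ℓ + 1) + ℓ

lemma K_spec (ℓ r i j : ℕ) : (r * i + 1) * (r * ℓ + 1) ^ j = r * K ℓ r i j + 1 := by
  induction j with
  | zero => simp [K]
  | succ j ih => rw [pow_succ, ← mul_assoc, ih, K]; ring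

lemma L_eq (ℓ r i j : ℕ) (hr : 1 ≤ r) : L ℓ r i j = K ℓ r i j - 1 := by
  rw [L, K_spec]
  have : r * K ℓ r i j + 1 - 1 = r * K ℓ r i j := by omega
  rw [this, Nat.mul_div_cancel_left _ hr]

lemma K_pos (ℓ r i j : ℕ) (hi : 1 ≤ i) : 1 ≤ K ℓ r i j := by
  induction j with
  | zero => simpa [K]
  | succ j ih =>
    calc 1 ≤ K ℓ r i j := ih
    _ ≤ K ℓ r i j * (r * ℓ + 1) := Nat.le_mul_of_pos_right _ (by omega)
    _ ≤ K ℓ r i (j + 1) := Nat.le_add_right _ _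

lemma K_mod (ℓ r i j : ℕ) : K ℓ r i j % ℓ = i % ℓ := by
  induction j with
  | zero => rfl
  | succ j ih =>
    show (K ℓ r i j * (r * ℓ + 1) + ℓ) % ℓ = i % ℓ
    have h : K ℓ r i j * (r * ℓ + 1) + ℓ = K ℓ r i j + (K ℓ r i j * r + 1) * ℓ := by ring
    rw [h, Nat.add_mul_mod_self_right]; exact ih

lemma K_step (ℓ r i j j' : ℕ) (hℓ : 1 ≤ ℓ) (h : j < j') :
    K ℓ r i j * (r * ℓ + 1) + 1 ≤ K ℓ r i j' := by
  induction j' with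
  | zero => omega
  | succ j' ih =>
    rcases Nat.lt_succ_iff_lt_or_eq.mp h with h | h
    · have := ih h
      have h2 : K ℓ r i j' ≤ K ℓ r i (j' + 1) := by
        calc K ℓ r i j' ≤ K ℓ r i j' * (r * ℓ + 1) := Nat.le_mul_of_pos_right _ (by omega)
        _ ≤ K ℓ r i j' * (r * ℓ + 1) + ℓ := Nat.le_add_right _ _
      omega
    · subst h; show _ ≤ K ℓ r i j * (r * ℓ + 1) + ℓ; omega

lemma output_replicate {ℓ r : ℕ} : ∀ {u : ℕ} {w : List ℕ},
    IsOutput ℓ r (List.replicate u 0) w → ∃ s ≤ r * u, w = List.replicate (u + ℓ * s) 0 := by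
  intro u
  induction u with
  | zero =>
    intro w h
    rw [List.replicate_zero] at h
    cases h
    exact ⟨0, by omega, by simp⟩
  | succ u ih =>
    intro w h
    rw [List.replicate_succ] at h
    cases h with
    | cons _ c hc hy =>
      obtain ⟨s, hs, rfl⟩ := ih hy
      refine ⟨c + s, by nlinarith, ?_⟩
      rw [← List.replicate_add, ← List.replicate_succ]
      congr 1
      ring

lemma output_block {ℓ r σ u : ℕ} {w : List ℕ} (h : IsOutput ℓ r (block σ u) w) :
    ∃ s ≤ r * (u + 1), w = σ :: List.replicate (u + ℓ * s) 0 := by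
  rw [block] at h
  cases h with
  | cons _ c hc hy =>
    obtain ⟨s, hs, rfl⟩ := output_replicate hy
    refine ⟨c + s, by nlinarith, ?_⟩
    congr 1
    rw [← List.replicate_add]
    congr 1
    ring

/-- any two distinct blocks of `B q ℓ r` are non-confusable in the
(ℓ,r)-0-insertion channel, i.e. `B q ℓ r` is a zero-error code for this channel. -/
theorem stmt0 (q ℓ r : ℕ) (hq : 2 ≤ q) (hℓ : 1 ≤ ℓ) (hr : 1 ≤ r) :
    ZeroErrorCode ℓ r (B q ℓ r) := by
  rintro x ⟨σ, i, j, hσ1, hσq, hi1, hiℓ, rfl⟩ y ⟨τ, i', j', hτ1, hτq, hi'1, hi'ℓ, rfl⟩ hne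
    ⟨z, hzx, hzy⟩
  obtain ⟨s, hs, rfl⟩ := output_block hzx
  obtain ⟨t, ht, hz⟩ := output_block hzy
  have hστ : σ = τ := by injection hz
  have hlen : L ℓ r i j + ℓ * s = L ℓ r i' j' + ℓ * t := by
    have := congrArg List.length hz
    simpa using this
  have hu : L ℓ r i j + 1 = K ℓ r i j := by
    rw [L_eq _ _ _ _ hr]; have := K_pos ℓ r i j hi1; omega
  have hv : L ℓ r i' j' + 1 = K ℓ r i' j' := by
    rw [L_eq _ _ _ _ hr]; have := K_pos ℓ r i' j' hi'1; omega
  have heq : K ℓ r i j + ℓ * s = K ℓ r i' j' + ℓ * t := by omega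
  have hmod : i % ℓ = i' % ℓ := by
    have h1 : (K ℓ r i j + ℓ * s) % ℓ = K ℓ r i j % ℓ := by
      rw [mul_comm, Nat.add_mul_mod_self_right]
    have h2 : (K ℓ r i' j' + ℓ * t) % ℓ = K ℓ r i' j' % ℓ := by
      rw [mul_comm, Nat.add_mul_mod_self_right]
    rw [← K_mod ℓ r i j, ← K_mod ℓ r i' j', ← h1, ← h2, heq]
  have hii : i = i' := by
    rcases le_total i i' with h | h
    · have hd : ℓ ∣ i' - i := (Nat.modEq_iff_dvd' h).mp hmod
      rcases Nat.eq_zero_or_pos (i' - i) with h0 | h0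
      · omega
      · have := Nat.le_of_dvd h0 hd; omega
    · have hd : ℓ ∣ i - i' := (Nat.modEq_iff_dvd' h).mp hmod.symm
      rcases Nat.eq_zero_or_pos (i - i') with h0 | h0
      · omega
      · have := Nat.le_of_dvd h0 hd; omega
  subst hii
  subst hστ
  have key : ∀ a b p p' : ℕ, a < b → p ≤ r * K ℓ r i a →
      K ℓ r i a + ℓ * p = K ℓ r i b + ℓ * p' → False := by
    intro a b p p' hab hp hpe
    have h1 := K_step ℓ r i a b hℓ hab
    have h2 : ℓ * p ≤ ℓ * (r * K ℓ r i a) := Nat.mul_le_mul_left _ hp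
    nlinarith
  rcases lt_trichotomy j j' with h | h | h
  · exact key j j' s t h (by rw [hu] at hs; exact hs) heq
  · subst h
    exact hne rfl
  · exact key j' j t s h (by rw [hv] at ht; exact ht) heq.symm

end ZeroErrorDup
end

section
/- For every n ≥ 1, the code C_{q,ℓ,r}(n) is a zero-error code for the (ℓ,r)-0-insertion channel: any two distinct codewords of C_{q,ℓ,r}(n) are non-confusable. -/
/-!
A block `σ 0^u` with `σ ≠ 0` leaves the channel as `σ 0^(u + k ℓ)` with `0 ≤ k ≤ r (u + 1)`,
and in an output the nonzero symbols mark where the blocks begin. So two codewords with a common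
output agree block by block, provided the run length `u + k ℓ` determines `u`. For `u = L(i,j)`
it does: `L(i,j) ≡ i - 1 (mod ℓ)` recovers `i`, and `L(i, j+1)` lies beyond every run
`L(i,j) + k ℓ`, which recovers `j`.
-/

namespace ZeroErrorDup

/-- `S q n`: strings over `A_q` of length between 1 and `n` whose first symbol is nonzero. -/
def S (q n : ℕ) : Set (List ℕ) :=
  { x | x ≠ [] ∧ x.length ≤ n ∧ (∀ a ∈ x, a < q) ∧ x.headI ≠ 0 }

/-- `C q ℓ r n`: strings in `S q n` that are concatenations of blocks from `B q ℓ r`. -/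
def C (q ℓ r n : ℕ) : Set (List ℕ) :=
  { x | x ∈ S q n ∧ ∃ bs : List (List ℕ), (∀ b ∈ bs, b ∈ B q ℓ r) ∧ x = bs.flatten }

section RunLengths

variable {ℓ r : ℕ}

lemma L_zero (hr : 0 < r) (i : ℕ) : L ℓ r i 0 = i - 1 := by
  simp [L, Nat.mul_div_cancel_left _ hr]

lemma L_spec (hr : 0 < r) {i : ℕ} (hi : 0 < i) (j : ℕ) :
    r * (L ℓ r i j + 1) + 1 = (r * i + 1) * (r * ℓ + 1) ^ j := by
  obtain ⟨s, hs⟩ : r ∣ (r * ℓ + 1) ^ j - 1 :=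
    (dvd_mul_right r ℓ).trans (by simpa using Nat.sub_one_dvd_pow_sub_one (r * ℓ + 1) j)
  have hpow : (r * ℓ + 1) ^ j = r * s + 1 := by
    have : 0 < (r * ℓ + 1) ^ j := by positivity
    omega
  have hsub : (r * i + 1) * (r * ℓ + 1) ^ j = r * (i + s * (r * i + 1)) + 1 := by
    rw [hpow]; ring
  rw [L, hsub, Nat.add_sub_cancel, Nat.mul_div_cancel_left _ hr, Nat.sub_add_cancel (by omega)]

/-- `L(i, j+1)` exceeds the longest output run `L + r ℓ (L + 1)` of `L = L(i,j)` by exactly `ℓ`. -/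
lemma L_succ (hr : 0 < r) {i : ℕ} (hi : 0 < i) (j : ℕ) :
    L ℓ r i (j + 1) = L ℓ r i j + r * ℓ * (L ℓ r i j + 1) + ℓ := by
  have h := L_spec (ℓ := ℓ) hr hi (j + 1)
  rw [pow_succ, ← mul_assoc, ← L_spec hr hi j] at h
  have : r * (L ℓ r i (j + 1) + 1) = r * (L ℓ r i j + r * ℓ * (L ℓ r i j + 1) + ℓ + 1) := by
    linarith
  linarith [Nat.eq_of_mul_eq_mul_left hr this]

lemma L_mod (hr : 0 < r) {i : ℕ} (hi : 0 < i) (j : ℕ) : L ℓ r i j % ℓ = (i - 1) % ℓ := by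
  induction j with
  | zero => rw [L_zero hr]
  | succ j ih =>
    rw [L_succ hr hi, ← ih, show L ℓ r i j + r * ℓ * (L ℓ r i j + 1) + ℓ
      = L ℓ r i j + ℓ * (r * (L ℓ r i j + 1) + 1) by ring, Nat.add_mul_mod_self_left]

lemma L_add_lt (hℓ : 0 < ℓ) (hr : 0 < r) {i j j' k : ℕ} (hi : 0 < i) (hj : j < j')
    (hk : k ≤ r * (L ℓ r i j + 1)) : L ℓ r i j + k * ℓ < L ℓ r i j' := by
  induction j', hj using Nat.le_induction with
  | base =>
    rw [L_succ hr hi]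
    have : k * ℓ ≤ r * (L ℓ r i j + 1) * ℓ := Nat.mul_le_mul_right ℓ hk
    linarith
  | succ j' _ ih =>
    rw [L_succ hr hi]
    omega

end RunLengths

/-- A block `σ 0^u` passes the channel as `σ 0^(u + k ℓ)` with `k ≤ r (u + 1)`; a set `U` of
run lengths is separated when these outputs determine `u ∈ U`. -/
def RunLengthsSeparated (ℓ r : ℕ) (U : Set ℕ) : Prop :=
  ∀ u ∈ U, ∀ v ∈ U, ∀ k ≤ r * (u + 1), ∀ m ≤ r * (v + 1), u + k * ℓ = v + m * ℓ → u = v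

def blockLengths (ℓ r : ℕ) : Set ℕ :=
  { u | ∃ i j, 1 ≤ i ∧ i ≤ ℓ ∧ u = L ℓ r i j }

theorem runLengthsSeparated_blockLengths (ℓ r : ℕ) :
    RunLengthsSeparated ℓ r (blockLengths ℓ r) := by
  rcases Nat.eq_zero_or_pos r with rfl | hr
  · intro u _ v _ k hk m hm h
    simp_all
  rintro _ ⟨i, j, hi, hiℓ, rfl⟩ _ ⟨i', j', hi', hi'ℓ, rfl⟩ k hk m hm h
  obtain rfl : i = i' := by
    have := congrArg (· % ℓ) h
    simp only [Nat.add_mul_mod_self_right, L_mod hr hi, L_mod hr hi'] at this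
    rw [Nat.mod_eq_of_lt (by omega), Nat.mod_eq_of_lt (by omega)] at this
    omega
  rcases lt_trichotomy j j' with hj | rfl | hj
  · have := L_add_lt (by omega) hr hi hj hk
    omega
  · rfl
  · have := L_add_lt (by omega) hr hi hj hm
    omega

theorem _root_.List.replicate_append_inj {α : Type*} {a : α} {m n : ℕ} {x y : List α}
    (hx : x.head? ≠ some a) (hy : y.head? ≠ some a)
    (h : List.replicate m a ++ x = List.replicate n a ++ y) : m = n ∧ x = y := by
  induction m generalizing n with
  | zero =>
    cases n with
    | zero => exact ⟨rfl, h⟩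
    | succ n =>
      rw [List.replicate_zero, List.nil_append] at h
      simp [h, List.replicate_succ] at hx
  | succ m ih =>
    cases n with
    | zero =>
      rw [List.replicate_zero, List.nil_append] at h
      simp [← h, List.replicate_succ] at hy
    | succ n =>
      simp only [List.replicate_succ, List.cons_append, List.cons.injEq, true_and] at h
      simpa using ih h

namespace IsOutput

variable {ℓ r : ℕ}

theorem head?_eq {x z : List ℕ} (h : IsOutput ℓ r x z) : z.head? = x.head? := by
  cases h <;> rfl

theorem exists_of_cons_replicate_append {σ u : ℕ} {x z : List ℕ}
    (h : IsOutput ℓ r (σ :: (List.replicate u 0 ++ x)) z) :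
    ∃ k ≤ r * (u + 1), ∃ z',
      z = σ :: (List.replicate (u + k * ℓ) 0 ++ z') ∧ IsOutput ℓ r x z' := by
  induction u generalizing σ z with
  | zero =>
    obtain _ | ⟨_, c, hc, h'⟩ := h
    exact ⟨c, by simpa using hc, _, by simp, h'⟩
  | succ u ih =>
    rw [List.replicate_succ, List.cons_append] at h
    obtain _ | ⟨_, c, hc, h'⟩ := h
    obtain ⟨k, hk, z', rfl, hz'⟩ := ih h'
    refine ⟨c + k, by linarith, z', ?_, hz'⟩
    congr 1
    rw [← List.cons_append, ← List.replicate_succ, ← List.append_assoc, ← List.replicate_add]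
    congr 2
    ring

end IsOutput

def blocks (U : Set ℕ) : Set (List ℕ) :=
  { b | ∃ σ ≠ 0, ∃ u ∈ U, b = block σ u }

theorem B_subset_blocks (q ℓ r : ℕ) : B q ℓ r ⊆ blocks (blockLengths ℓ r) := by
  rintro _ ⟨σ, i, j, hσ, -, hi, hiℓ, rfl⟩
  exact ⟨σ, by omega, _, ⟨i, j, hi, hiℓ, rfl⟩, rfl⟩

theorem head?_flatten_ne_zero {U : Set ℕ} {bs : List (List ℕ)}
    (hbs : ∀ b ∈ bs, b ∈ blocks U) :
    bs.flatten.head? ≠ some 0 := by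
  cases bs with
  | nil => simp
  | cons b bs =>
    obtain ⟨σ, hσ, u, -, rfl⟩ := hbs b List.mem_cons_self
    simpa [block] using hσ

/-- Parsing an output into maximal runs `σ 0^m` undoes the channel block by block. -/
theorem flatten_eq_of_isOutput {ℓ r : ℕ} {U : Set ℕ} (hU : RunLengthsSeparated ℓ r U)
    {bs cs : List (List ℕ)} (hbs : ∀ b ∈ bs, b ∈ blocks U) (hcs : ∀ c ∈ cs, c ∈ blocks U)
    {z : List ℕ} (hb : IsOutput ℓ r bs.flatten z) (hc : IsOutput ℓ r cs.flatten z) :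
    bs.flatten = cs.flatten := by
  induction bs generalizing cs z with
  | nil =>
    rw [List.flatten_nil, eq_comm, ← List.head?_eq_none_iff, ← hc.head?_eq, hb.head?_eq]
    rfl
  | cons b bs ih =>
    obtain ⟨σ, -, u, hu, rfl⟩ := hbs b List.mem_cons_self
    obtain _ | ⟨c, cs⟩ := cs
    · exact absurd (hb.head?_eq.symm.trans hc.head?_eq) (by simp [block])
    obtain ⟨τ, -, v, hv, rfl⟩ := hcs c List.mem_cons_self
    have hbs' := fun b hb => hbs b (List.mem_cons_of_mem _ hb)
    have hcs' := fun c hc => hcs c (List.mem_cons_of_mem _ hc)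
    simp only [List.flatten_cons, block, List.cons_append] at hb hc ⊢
    obtain ⟨k, hk, z₁, rfl, hz₁⟩ := hb.exists_of_cons_replicate_append
    obtain ⟨m, hm, z₂, hz, hz₂⟩ := hc.exists_of_cons_replicate_append
    obtain ⟨rfl, hzeros⟩ := List.cons.inj hz
    obtain ⟨hlen, rfl⟩ := List.replicate_append_inj (hz₁.head?_eq ▸ head?_flatten_ne_zero hbs')
      (hz₂.head?_eq ▸ head?_flatten_ne_zero hcs') hzeros
    obtain rfl := hU u hu v hv k hk m hm hlen
    rw [ih hbs' hcs' hz₁ hz₂]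

theorem stmt1_general (q ℓ r n : ℕ) :
    ZeroErrorCode ℓ r (C q ℓ r n) := by
  rintro _ ⟨-, bs, hbs, rfl⟩ _ ⟨-, cs, hcs, rfl⟩ hne ⟨z, hb, hc⟩
  exact hne <| flatten_eq_of_isOutput (runLengthsSeparated_blockLengths ℓ r)
    (fun b h => B_subset_blocks q ℓ r (hbs b h)) (fun c h => B_subset_blocks q ℓ r (hcs c h)) hb hc

/-- for every `n ≥ 1`, `C q ℓ r n` is a zero-error code for the
(ℓ,r)-0-insertion channel. -/
theorem stmt1 (q ℓ r n : ℕ) (hq : 2 ≤ q) (hℓ : 1 ≤ ℓ) (hr : 1 ≤ r) (hn : 1 ≤ n) :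
    ZeroErrorCode ℓ r (C q ℓ r n) :=
  stmt1_general q ℓ r n

end ZeroErrorDup
end

section
/- Let σ, τ ∈ {1,…,q−1} and let u ≤ v be nonnegative integers. The blocks σ 0^{u} and τ 0^{v} are confusable in the (ℓ,r)-0-insertion channel if and only if σ = τ, ℓ divides v − u, and v − u ≤ (u+1) r ℓ. -/
namespace ZeroErrorDup

lemma zeros_output (ℓ r : ℕ) : ∀ u y, IsOutput ℓ r (List.replicate u 0) y →
    ∃ s ≤ u * r, y = List.replicate (u + s * ℓ) 0 := by
  intro u
  induction u with
  | zero =>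
    intro y h
    cases h
    exact ⟨0, by simp, by simp⟩
  | succ u ih =>
    intro y h
    rw [List.replicate_succ] at h
    cases h with
    | cons a c hc h' =>
      obtain ⟨s, hs, rfl⟩ := ih _ h'
      refine ⟨c + s, by nlinarith, ?_⟩
      rw [← List.replicate_add, ← List.replicate_succ]
      congr 1
      ring

lemma zeros_input (ℓ r : ℕ) : ∀ u s, s ≤ u * r →
    IsOutput ℓ r (List.replicate u 0) (List.replicate (u + s * ℓ) 0) := by
  intro u
  induction u with
  | zero =>
    intro s hs
    simp only [Nat.zero_mul, Nat.le_zero] at hs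
    subst hs
    simpa using IsOutput.nil
  | succ u ih =>
    intro s hs
    have hm : min s r ≤ s := Nat.min_le_left _ _
    have h2 : s - min s r ≤ u * r := by
      rcases le_total s r with h | h
      · simp [Nat.min_eq_left h]
      · rw [Nat.min_eq_right h]
        have : s ≤ u * r + r := by nlinarith
        omega
    have key : min s r * ℓ + (s - min s r) * ℓ = s * ℓ := by
      rw [← Nat.add_mul, Nat.add_sub_cancel' hm]
    have h3 := IsOutput.cons 0 (min s r) (Nat.min_le_right _ _) (ih _ h2)
    rw [← List.replicate_add, ← List.replicate_succ] at h3
    have hidx : (s ⊓ r) * ℓ + (u + (s - s ⊓ r) * ℓ) + 1 = u + 1 + s * ℓ := by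
      rw [← key]; ring
    rw [List.replicate_succ, ← hidx]
    exact h3

lemma block_output (ℓ r σ u : ℕ) (z : List ℕ) :
    IsOutput ℓ r (block σ u) z ↔ ∃ s ≤ (u + 1) * r, z = block σ (u + s * ℓ) := by
  constructor
  · intro h
    rw [block] at h
    cases h with
    | cons a c hc h' =>
      obtain ⟨s, hs, rfl⟩ := zeros_output ℓ r u _ h'
      refine ⟨c + s, by nlinarith, ?_⟩
      rw [block, ← List.replicate_add]
      congr 2
      ring
  · rintro ⟨s, hs, rfl⟩
    have hm : min s r ≤ s := Nat.min_le_left _ _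
    have h2 : s - min s r ≤ u * r := by
      rcases le_total s r with h | h
      · simp [Nat.min_eq_left h]
      · rw [Nat.min_eq_right h]
        have : s ≤ u * r + r := by nlinarith
        omega
    have key : min s r * ℓ + (s - min s r) * ℓ = s * ℓ := by
      rw [← Nat.add_mul, Nat.add_sub_cancel' hm]
    have h3 := IsOutput.cons σ (min s r) (Nat.min_le_right _ _) (zeros_input ℓ r u _ h2)
    rw [← List.replicate_add] at h3
    have hidx : (s ⊓ r) * ℓ + (u + (s - s ⊓ r) * ℓ) = u + s * ℓ := by
      rw [← key]; ring
    rw [block, block, ← hidx]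
    exact h3

/-- for `σ, τ ∈ {1,…,q−1}` and `u ≤ v`, the blocks `σ 0^u` and `τ 0^v`
are confusable in the (ℓ,r)-0-insertion channel iff `σ = τ`, `ℓ ∣ v − u` and
`v − u ≤ (u+1) r ℓ`. -/
theorem stmt6 (q ℓ r : ℕ) (hq : 2 ≤ q) (hℓ : 1 ≤ ℓ) (hr : 1 ≤ r)
    (σ τ u v : ℕ) (hσ1 : 1 ≤ σ) (hσ2 : σ ≤ q - 1) (hτ1 : 1 ≤ τ) (hτ2 : τ ≤ q - 1)
    (huv : u ≤ v) :
    Confusable ℓ r (block σ u) (block τ v) ↔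
      σ = τ ∧ ℓ ∣ (v - u) ∧ v - u ≤ (u + 1) * r * ℓ := by
  constructor
  · rintro ⟨z, h1, h2⟩
    rw [block_output] at h1 h2
    obtain ⟨s, hs, rfl⟩ := h1
    obtain ⟨t, ht, heq⟩ := h2
    rw [block, block, List.cons.injEq] at heq
    obtain ⟨hστ, hrep⟩ := heq
    have hlen : u + s * ℓ = v + t * ℓ := by
      have := congrArg List.length hrep
      simpa using this
    have hsub : v - u = (s - t) * ℓ := by
      rw [Nat.sub_mul]; omega
    refine ⟨hστ, ⟨s - t, by rw [hsub, Nat.mul_comm]⟩, ?_⟩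
    calc v - u = (s - t) * ℓ := hsub
      _ ≤ ((u + 1) * r) * ℓ :=
        Nat.mul_le_mul_right ℓ (le_trans (Nat.sub_le s t) hs)
  · rintro ⟨rfl, ⟨k, hk⟩, hle⟩
    have hk' : k ≤ (u + 1) * r := by
      apply Nat.le_of_mul_le_mul_left _ (show 0 < ℓ by omega)
      calc ℓ * k = v - u := hk.symm
        _ ≤ (u + 1) * r * ℓ := hle
        _ = ℓ * ((u + 1) * r) := by ring
    refine ⟨block σ (u + k * ℓ), (block_output ℓ r σ u _).2 ⟨k, hk', rfl⟩, ?_⟩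
    have hv : u + k * ℓ = v + 0 * ℓ := by
      have : k * ℓ = v - u := by rw [Nat.mul_comm]; omega
      omega
    rw [hv]
    exact (block_output ℓ r σ v _).2 ⟨0, by simp, rfl⟩

end ZeroErrorDup
end

section
/- For fixed q ≥ 2 and r ≥ 1, the zero-error capacity C₀(ℓ) = −log₂ ρ(q,ℓ,r) is strictly increasing in ℓ (for ℓ ≥ 1), and lim_{ℓ→∞} C₀(ℓ) = log₂ q. -/
/-!
Sort the exponents `L(i,j) + 1` along `n = jℓ + (i - 1)`: then `v_{q,ℓ,r}(x) = (q-1) Σₙ x^{e_ℓ(n)}`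
with `r e_ℓ(n) + 1 = w_ℓ(n) = (r(n mod ℓ + 1) + 1)(rℓ + 1)^⌊n/ℓ⌋`. Since `w_ℓ(n + ℓ) = (rℓ+1) w_ℓ(n)`
and consecutive values grow at least by the factor `(rℓ+r+1)/(rℓ+1)`, induction over periods
of length `ℓ + 1` gives `e_{ℓ+1}(n) ≤ e_ℓ(n)`, strictly at `n = ℓ`. Hence `v_{q,ℓ,r} < v_{q,ℓ+1,r}`
on `(0,1)`, and as `v` is increasing in `x` the roots `ρ_ℓ` strictly decrease.

Moreover `e_ℓ(n) ≥ n + 1`, with equality for `n < ℓ`, so `v_{q,ℓ,r}(x)` lies between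
`(q-1) Σ_{n<ℓ} x^{n+1}` and `(q-1) x/(1-x)`, whose root is `1/q`. This squeezes `ρ_ℓ` into
`[1/q, 1/q + ρ_1^ℓ]`.
-/

namespace ZeroErrorDup

/-- The generating function `v_{q,ℓ,r}(x) = (q−1) Σ_{j=0}^∞ Σ_{i=1}^ℓ x^{L(i,j)+1}`. -/
noncomputable def v (q ℓ r : ℕ) (x : ℝ) : ℝ :=
  ((q : ℝ) - 1) * ∑' j : ℕ, ∑ i ∈ Finset.Icc 1 ℓ, x ^ (L ℓ r i j + 1)

open Finset Filter Topology

theorem induction_of_lt_of_add {ℓ : ℕ} (hℓ : 0 < ℓ) {P : ℕ → Prop} (base : ∀ n < ℓ, P n)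
    (step : ∀ n, P n → P (n + ℓ)) (n : ℕ) : P n := by
  induction n using Nat.strong_induction_on with
  | _ n ih =>
    rcases lt_or_ge n ℓ with h | h
    · exact base n h
    · simpa [Nat.sub_add_cancel h] using step (n - ℓ) (ih _ (by omega))

/-- Enumerating `(i, j)` by `n = jℓ + (i - 1)`, this is `(r i + 1)(r ℓ + 1)^j = r (L(i,j) + 1) + 1`. -/
def weight (ℓ r n : ℕ) : ℕ := (r * (n % ℓ + 1) + 1) * (r * ℓ + 1) ^ (n / ℓ)

def exponent (ℓ r n : ℕ) : ℕ := (weight ℓ r n - 1) / r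

section weight

variable {ℓ : ℕ} (r : ℕ)

theorem weight_of_lt {n : ℕ} (h : n < ℓ) : weight ℓ r n = r * (n + 1) + 1 := by
  simp [weight, Nat.mod_eq_of_lt h, Nat.div_eq_of_lt h]

theorem weight_add (hℓ : 0 < ℓ) (n : ℕ) : weight ℓ r (n + ℓ) = (r * ℓ + 1) * weight ℓ r n := by
  simp only [weight, Nat.add_mod_right, Nat.add_div_right _ hℓ, pow_succ]
  ring

theorem weight_self : weight ℓ r ℓ = (r * ℓ + 1) * (r + 1) := by
  rcases Nat.eq_zero_or_pos ℓ with rfl | hℓ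
  · simp [weight]
  · simpa [weight_of_lt r hℓ] using weight_add r hℓ 0

theorem mul_succ_add_one_le_weight (hℓ : 0 < ℓ) (n : ℕ) : r * (n + 1) + 1 ≤ weight ℓ r n := by
  induction n using induction_of_lt_of_add hℓ with
  | base n h => exact (weight_of_lt r h).ge
  | step n ih =>
    calc r * (n + ℓ + 1) + 1 ≤ (r * ℓ + 1) * (r * (n + 1) + 1) := by
          nlinarith [Nat.zero_le (r * ℓ * (r * (n + 1)))]
      _ ≤ weight ℓ r (n + ℓ) := by rw [weight_add r hℓ]; exact Nat.mul_le_mul_left _ ih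

theorem mul_weight_le_mul_weight_succ (hℓ : 0 < ℓ) (n : ℕ) :
    (r * ℓ + 1 + r) * weight ℓ r n ≤ (r * ℓ + 1) * weight ℓ r (n + 1) := by
  induction n using induction_of_lt_of_add hℓ with
  | base n h =>
    rw [weight_of_lt r h]
    rcases Nat.lt_or_ge (n + 1) ℓ with h' | h'
    · rw [weight_of_lt r h']
      nlinarith [Nat.mul_le_mul_left (r * r) h'.le]
    · obtain rfl : ℓ = n + 1 := by omega
      rw [weight_self, mul_comm]
      exact Nat.mul_le_mul_left _ (by nlinarith [Nat.zero_le (r * (n + 1) * r)])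
  | step n ih =>
    rw [show n + ℓ + 1 = n + 1 + ℓ by omega, weight_add r hℓ, weight_add r hℓ, mul_left_comm]
    exact Nat.mul_le_mul_left _ ih

theorem weight_succ_left_le (hℓ : 0 < ℓ) (n : ℕ) : weight (ℓ + 1) r n ≤ weight ℓ r n := by
  induction n using induction_of_lt_of_add ℓ.succ_pos with
  | base n h =>
    rw [weight_of_lt r h]
    rcases Nat.lt_or_ge n ℓ with h' | h'
    · rw [weight_of_lt r h']
    · obtain rfl : n = ℓ := by omega
      rw [weight_self]
      nlinarith [Nat.zero_le (r * r * n)]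
  | step n ih =>
    calc weight (ℓ + 1) r (n + (ℓ + 1)) = (r * (ℓ + 1) + 1) * weight (ℓ + 1) r n :=
          weight_add r ℓ.succ_pos n
      _ ≤ (r * (ℓ + 1) + 1) * weight ℓ r n := Nat.mul_le_mul_left _ ih
      _ = (r * ℓ + 1 + r) * weight ℓ r n := by ring
      _ ≤ (r * ℓ + 1) * weight ℓ r (n + 1) := mul_weight_le_mul_weight_succ r hℓ n
      _ = weight ℓ r (n + (ℓ + 1)) := by
          rw [show n + (ℓ + 1) = n + 1 + ℓ by omega, weight_add r hℓ]

end weight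

section exponent

variable {ℓ r : ℕ}

theorem exponent_of_lt (hr : 0 < r) {n : ℕ} (h : n < ℓ) : exponent ℓ r n = n + 1 := by
  rw [exponent, weight_of_lt r h, Nat.add_sub_cancel, Nat.mul_div_cancel_left _ hr]

theorem succ_le_exponent (hℓ : 0 < ℓ) (hr : 0 < r) (n : ℕ) : n + 1 ≤ exponent ℓ r n :=
  (Nat.le_div_iff_mul_le hr).2 <| by
    rw [mul_comm]
    exact Nat.le_sub_one_of_lt (mul_succ_add_one_le_weight r hℓ n)

theorem exponent_succ_left_le (hℓ : 0 < ℓ) (n : ℕ) : exponent (ℓ + 1) r n ≤ exponent ℓ r n :=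
  Nat.div_le_div_right (Nat.sub_le_sub_right (weight_succ_left_le r hℓ n) 1)

theorem exponent_succ_left_self_lt (hℓ : 0 < ℓ) (hr : 0 < r) :
    exponent (ℓ + 1) r ℓ < exponent ℓ r ℓ := by
  have hsub : (r * ℓ + 1) * (r + 1) - 1 = r * (r * ℓ + ℓ + 1) :=
    Nat.sub_eq_of_eq_add (by ring)
  rw [exponent_of_lt hr ℓ.lt_succ_self, exponent, weight_self, hsub,
    Nat.mul_div_cancel_left _ hr]
  nlinarith

theorem L_add_one (hr : 0 < r) {i : ℕ} (hi : 0 < i) (j : ℕ) :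
    L ℓ r i j + 1 = ((r * i + 1) * (r * ℓ + 1) ^ j - 1) / r := by
  refine Nat.sub_add_cancel ((Nat.le_div_iff_mul_le hr).2 ?_)
  have : r * i + 1 ≤ (r * i + 1) * (r * ℓ + 1) ^ j :=
    Nat.le_mul_of_pos_right _ (pow_pos (Nat.succ_pos _) _)
  have : r ≤ r * i := Nat.le_mul_of_pos_right r hi
  omega

theorem exponent_mul_add (hr : 0 < r) {k : ℕ} (hk : k < ℓ) (j : ℕ) :
    exponent ℓ r (j * ℓ + k) = L ℓ r (k + 1) j + 1 := by
  have hℓ : 0 < ℓ := by omega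
  rw [L_add_one hr k.succ_pos, exponent, weight, Nat.mul_add_mod', Nat.mod_eq_of_lt hk,
    mul_comm j, Nat.mul_add_div hℓ, Nat.div_eq_of_lt hk, add_zero]

end exponent

theorem hasSum_sum_range_mul_add {α : Type*} [AddCommMonoid α] [TopologicalSpace α]
    [ContinuousAdd α] [RegularSpace α] {f : ℕ → α} {a : α} (hf : HasSum f a) {ℓ : ℕ}
    (hℓ : 0 < ℓ) : HasSum (fun j => ∑ k ∈ range ℓ, f (j * ℓ + k)) a := by
  have : NeZero ℓ := ⟨hℓ.ne'⟩
  refine ((Nat.divModEquiv ℓ).symm.hasSum_iff.2 hf).prod_fiberwise fun j => ?_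
  simpa [Nat.divModEquiv, Fin.sum_univ_eq_sum_range (fun k => f (j * ℓ + k))] using
    hasSum_fintype (fun k : Fin ℓ => f (j * ℓ + k))

section v

variable {q ℓ r : ℕ} {x y : ℝ}

theorem summable_pow_exponent (hℓ : 0 < ℓ) (hr : 0 < r) (hx0 : 0 ≤ x) (hx1 : x < 1) :
    Summable fun n => x ^ exponent ℓ r n :=
  (summable_geometric_of_lt_one hx0 hx1).of_nonneg_of_le (fun _ => pow_nonneg hx0 _)
    fun n => pow_le_pow_of_le_one hx0 hx1.le (n.le_succ.trans (succ_le_exponent hℓ hr n))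

theorem v_eq_tsum (hℓ : 0 < ℓ) (hr : 0 < r) (hx0 : 0 ≤ x) (hx1 : x < 1) :
    v q ℓ r x = (q - 1) * ∑' n, x ^ exponent ℓ r n := by
  rw [v, ← (hasSum_sum_range_mul_add (summable_pow_exponent hℓ hr hx0 hx1).hasSum hℓ).tsum_eq]
  congr 2 with j
  rw [← Ico_add_one_right_eq_Icc, ← zero_add 1, ← sum_Ico_add', ← range_eq_Ico]
  exact sum_congr rfl fun k hk => by rw [exponent_mul_add hr (mem_range.1 hk)]

theorem v_mono (hq : 1 ≤ q) (hℓ : 0 < ℓ) (hr : 0 < r) (hx0 : 0 ≤ x) (hxy : x ≤ y)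
    (hy1 : y < 1) : v q ℓ r x ≤ v q ℓ r y := by
  rw [v_eq_tsum hℓ hr hx0 (hxy.trans_lt hy1), v_eq_tsum hℓ hr (hx0.trans hxy) hy1]
  gcongr
  · exact sub_nonneg.2 (by exact_mod_cast hq)
  · exact summable_pow_exponent hℓ hr hx0 (hxy.trans_lt hy1)
  · exact summable_pow_exponent hℓ hr (hx0.trans hxy) hy1

theorem v_lt_v_succ (hq : 2 ≤ q) (hℓ : 0 < ℓ) (hr : 0 < r) (hx0 : 0 < x) (hx1 : x < 1) :
    v q ℓ r x < v q (ℓ + 1) r x := by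
  rw [v_eq_tsum hℓ hr hx0.le hx1, v_eq_tsum ℓ.succ_pos hr hx0.le hx1]
  refine mul_lt_mul_of_pos_left ?_ (by linarith [show (2 : ℝ) ≤ q by exact_mod_cast hq])
  exact (summable_pow_exponent hℓ hr hx0.le hx1).tsum_lt_tsum
    (fun n => pow_le_pow_of_le_one hx0.le hx1.le (exponent_succ_left_le hℓ n))
    (pow_lt_pow_right_of_lt_one₀ hx0 hx1 (exponent_succ_left_self_lt hℓ hr))
    (summable_pow_exponent ℓ.succ_pos hr hx0.le hx1)

theorem v_mul_one_sub_le (hq : 1 ≤ q) (hℓ : 0 < ℓ) (hr : 0 < r) (hx0 : 0 ≤ x) (hx1 : x < 1) :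
    v q ℓ r x * (1 - x) ≤ (q - 1) * x := by
  have hgeom : HasSum (fun n : ℕ => x ^ (n + 1)) (x * (1 - x)⁻¹) := by
    simpa [pow_succ'] using (hasSum_geometric_of_lt_one hx0 hx1).mul_left x
  have hle : ∑' n, x ^ exponent ℓ r n ≤ x * (1 - x)⁻¹ :=
    hasSum_le (fun n => pow_le_pow_of_le_one hx0 hx1.le (succ_le_exponent hℓ hr n))
      (summable_pow_exponent hℓ hr hx0 hx1).hasSum hgeom
  have hx1' : 0 < 1 - x := sub_pos.2 hx1
  calc v q ℓ r x * (1 - x) ≤ (q - 1) * (x * (1 - x)⁻¹) * (1 - x) := by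
        rw [v_eq_tsum hℓ hr hx0 hx1]
        gcongr
        exact sub_nonneg.2 (by exact_mod_cast hq)
    _ = (q - 1) * x := by field_simp

theorem mul_one_sub_pow_le_v (hq : 1 ≤ q) (hℓ : 0 < ℓ) (hr : 0 < r) (hx0 : 0 ≤ x)
    (hx1 : x < 1) : (q - 1) * x * (1 - x ^ ℓ) ≤ v q ℓ r x * (1 - x) := by
  have hpartial : ∑ n ∈ range ℓ, x ^ (n + 1) ≤ ∑' n, x ^ exponent ℓ r n := by
    rw [sum_congr rfl fun n hn => by rw [← exponent_of_lt hr (mem_range.1 hn)]]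
    exact (summable_pow_exponent hℓ hr hx0 hx1).sum_le_tsum _ fun n _ => pow_nonneg hx0 _
  have hgeom : x * (1 - x ^ ℓ) = (∑ n ∈ range ℓ, x ^ (n + 1)) * (1 - x) := by
    simp_rw [pow_succ', ← mul_sum, ← mul_neg_geom_sum]
    ring
  rw [v_eq_tsum hℓ hr hx0 hx1, mul_assoc, hgeom, ← mul_assoc]
  gcongr
  exact sub_nonneg.2 (by exact_mod_cast hq)

theorem inv_le_of_v_eq_one (hq : 1 ≤ q) (hℓ : 0 < ℓ) (hr : 0 < r) (hx : x ∈ Set.Ioo 0 1)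
    (hv : v q ℓ r x = 1) : (q : ℝ)⁻¹ ≤ x := by
  have h := v_mul_one_sub_le hq hℓ hr hx.1.le hx.2
  rw [hv] at h
  rw [inv_le_iff_one_le_mul₀ (Nat.cast_pos.2 hq)]
  linarith

theorem le_inv_add_pow_of_v_eq_one (hq : 1 ≤ q) (hℓ : 0 < ℓ) (hr : 0 < r)
    (hx : x ∈ Set.Ioo 0 1) (hv : v q ℓ r x = 1) : x ≤ (q : ℝ)⁻¹ + x ^ ℓ := by
  have h := mul_one_sub_pow_le_v hq hℓ hr hx.1.le hx.2
  rw [hv, one_mul] at h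
  have hq0 : (0 : ℝ) < q := Nat.cast_pos.2 hq
  have hpow : x * x ^ ℓ ≤ x ^ ℓ := mul_le_of_le_one_left (pow_nonneg hx.1.le _) hx.2.le
  have hpow' : (q - 1) * (x * x ^ ℓ) ≤ (q - 1) * x ^ ℓ :=
    mul_le_mul_of_nonneg_left hpow (by linarith [show (1 : ℝ) ≤ q by exact_mod_cast hq])
  have hqx : q * x ≤ 1 + q * x ^ ℓ := by nlinarith [pow_nonneg hx.1.le ℓ]
  calc x = (q : ℝ)⁻¹ * (q * x) := by field_simp
    _ ≤ (q : ℝ)⁻¹ * (1 + q * x ^ ℓ) := by gcongr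
    _ = (q : ℝ)⁻¹ + x ^ ℓ := by field_simp

theorem root_succ_lt (hq : 2 ≤ q) (hℓ : 0 < ℓ) (hr : 0 < r) (hx : x ∈ Set.Ioo 0 1)
    (hy : y ∈ Set.Ioo 0 1) (hvx : v q ℓ r x = 1) (hvy : v q (ℓ + 1) r y = 1) : y < x := by
  by_contra! hxy
  have := v_lt_v_succ hq hℓ hr hx.1 hx.2
  have := v_mono (by omega : 1 ≤ q) ℓ.succ_pos hr hx.1.le hxy hy.2
  linarith

end v

/-- for fixed `q ≥ 2` and `r ≥ 1`, the zero-error capacity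
`C₀(ℓ) = −log₂ ρ(q,ℓ,r)` is strictly increasing in `ℓ ≥ 1`, and
`lim_{ℓ→∞} C₀(ℓ) = log₂ q`. -/
theorem stmt15 (q r : ℕ) (hq : 2 ≤ q) (hr : 1 ≤ r)
    (ρ : ℕ → ℝ) (hρ : ∀ ℓ : ℕ, 1 ≤ ℓ → ρ ℓ ∈ Set.Ioo (0 : ℝ) 1 ∧ v q ℓ r (ρ ℓ) = 1) :
    StrictMonoOn (fun ℓ : ℕ => - Real.logb 2 (ρ ℓ)) (Set.Ici 1) ∧
    Filter.Tendsto (fun ℓ : ℕ => - Real.logb 2 (ρ ℓ)) Filter.atTop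
      (nhds (Real.logb 2 (q : ℝ))) := by
  have hanti : StrictAntiOn ρ (Set.Ici 1) :=
    strictAntiOn_of_succ_lt Set.ordConnected_Ici fun ℓ _ hℓ hℓ' =>
      root_succ_lt hq hℓ hr (hρ ℓ hℓ).1 (hρ _ hℓ').1 (hρ ℓ hℓ).2 (hρ _ hℓ').2
  have hlim : Tendsto ρ atTop (𝓝 (q : ℝ)⁻¹) := by
    have hlower : ∀ᶠ ℓ in atTop, (q : ℝ)⁻¹ ≤ ρ ℓ :=
      (eventually_ge_atTop 1).mono fun ℓ hℓ =>
        inv_le_of_v_eq_one (by omega) hℓ hr (hρ ℓ hℓ).1 (hρ ℓ hℓ).2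
    have hupper : ∀ᶠ ℓ in atTop, ρ ℓ ≤ (q : ℝ)⁻¹ + ρ 1 ^ ℓ :=
      (eventually_ge_atTop 1).mono fun ℓ hℓ =>
        (le_inv_add_pow_of_v_eq_one (by omega) hℓ hr (hρ ℓ hℓ).1 (hρ ℓ hℓ).2).trans <|
          add_le_add_right (pow_le_pow_left₀ (hρ ℓ hℓ).1.1.le
            (hanti.antitoneOn Set.self_mem_Ici hℓ hℓ) ℓ) _
    refine tendsto_of_tendsto_of_tendsto_of_le_of_le' tendsto_const_nhds ?_ hlower hupper
    simpa using tendsto_const_nhds.add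
      (tendsto_pow_atTop_nhds_zero_of_lt_one (hρ 1 le_rfl).1.1.le (hρ 1 le_rfl).1.2)
  refine ⟨fun a ha b hb hab =>
    neg_lt_neg (Real.logb_lt_logb one_lt_two (hρ b hb).1.1 (hanti ha hb hab)), ?_⟩
  simpa [Real.logb_inv, Function.comp_def] using
    (Real.continuousAt_logb (inv_ne_zero (Nat.cast_ne_zero.2 (by omega)))).neg.tendsto.comp hlim

end ZeroErrorDup
end
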